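/- arXiv:2303.14208 — 2 statements merged into one kernel-verified Lean document; each statement's English description precedes it below -/
import Mathlib

section
/- Let E : [0,∞) → ℝ be differentiable, k : [0,∞) → ℝ locally integrable, b > 0, and suppose E'(t) ≤ 6|k(t)|·𝓔(t) for all t ≥ 0, where 𝓔(t) := max(c₀, b²·sup_{s∈[0,t]} E(s)) for some constant c₀ ≥ 0. Then 𝓔(t) ≤ 𝓔(0)·exp(6b²∫₀ᵗ |k(s)| ds) for all t ≥ 0, and consequently E(t) ≤ (1/b²)·exp(6b²∫₀ᵗ |k(s)| ds)·𝓔(0). -/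
/-!
Put `c = 6 b² |k|`. Integrating `E' ≤ 6 |k| 𝓔` from `0` to `s ≤ t` gives
`b² E(s) ≤ 𝓔(0) + ∫₀ᵗ c 𝓔`, hence `𝓔(t) ≤ 𝓔(0) + ∫₀ᵗ c 𝓔`. Since `c` is only integrable,
Gronwall's lemma is proved through absolutely continuous functions: if `u ≤ A + F` with
`F = ∫ c u` and `I = ∫ c`, then `(A + F) e^{-I}` is absolutely continuous with a.e. derivative
`c (u - A - F) e^{-I} ≤ 0`, so it stays below its initial value `A`.
-/

open Real MeasureTheory intervalIntegral Set

/-- The functional `𝓔(t) = max(c₀, b² · sup_{s ∈ [0,t]} E(s))`. -/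
noncomputable def calE (E : ℝ → ℝ) (b c₀ t : ℝ) : ℝ :=
  max c₀ (b ^ 2 * sSup (E '' Set.Icc 0 t))

theorem LipschitzOnWith.comp_absolutelyContinuousOnInterval {X Y : Type*} [PseudoMetricSpace X]
    [PseudoMetricSpace Y] {g : X → Y} {K : NNReal} {s : Set X} {f : ℝ → X} {a b : ℝ}
    (hg : LipschitzOnWith K g s) (hf : AbsolutelyContinuousOnInterval f a b)
    (hfs : MapsTo f (uIcc a b) s) : AbsolutelyContinuousOnInterval (g ∘ f) a b := by
  rw [absolutelyContinuousOnInterval_iff] at hf ⊢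
  intro ε hε
  obtain ⟨δ, hδ, hfδ⟩ := hf (ε / (K + 1)) (by positivity)
  refine ⟨δ, hδ, fun E hE hlen => ?_⟩
  calc ∑ i ∈ Finset.range E.1, dist ((g ∘ f) (E.2 i).1) ((g ∘ f) (E.2 i).2)
      ≤ ∑ i ∈ Finset.range E.1, K * dist (f (E.2 i).1) (f (E.2 i).2) :=
        Finset.sum_le_sum fun i hi =>
          hg.dist_le_mul _ (hfs (hE.1 i hi).1) _ (hfs (hE.1 i hi).2)
    _ = K * ∑ i ∈ Finset.range E.1, dist (f (E.2 i).1) (f (E.2 i).2) := by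
        rw [Finset.mul_sum]
    _ ≤ K * (ε / (K + 1)) := by gcongr; exact (hfδ E hE hlen).le
    _ < (K + 1) * (ε / (K + 1)) := by gcongr; linarith
    _ = ε := by field_simp

theorem Real.lipschitzOnWith_exp_Iic_zero : LipschitzOnWith 1 exp (Iic 0) :=
  (convex_Iic 0).lipschitzOnWith_of_nnnorm_deriv_le (fun x _ => differentiableAt_exp)
    fun x hx => by
      rw [Real.deriv_exp, ← NNReal.coe_le_coe, coe_nnnorm, norm_of_nonneg (exp_pos x).le]
      simpa using hx

theorem IntervalIntegrable.mul_monotoneOn {c u : ℝ → ℝ} {a b : ℝ}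
    (hc : IntervalIntegrable c volume a b) (hu : MonotoneOn u (uIcc a b)) :
    IntervalIntegrable (fun x => c x * u x) volume a b := by
  rw [intervalIntegrable_iff] at hc ⊢
  refine hc.mul_bdd (c := max |u (min a b)| |u (max a b)|)
    (intervalIntegrable_iff.1 hu.intervalIntegrable).aestronglyMeasurable ?_
  filter_upwards [ae_restrict_mem measurableSet_uIoc] with x hx
  have hx' := uIoc_subset_uIcc hx
  exact abs_le_max_abs_abs (hu ⟨le_rfl, inf_le_sup⟩ hx' hx'.1) (hu hx' ⟨inf_le_sup, le_rfl⟩ hx'.2)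

theorem le_mul_exp_integral_of_le_add_integral {c u : ℝ → ℝ} {A a b : ℝ} (hab : a ≤ b)
    (hc : IntervalIntegrable c volume a b)
    (hcu : IntervalIntegrable (fun s => c s * u s) volume a b)
    (hc_nonneg : ∀ x ∈ Icc a b, 0 ≤ c x)
    (hu : ∀ t ∈ Icc a b, u t ≤ A + ∫ s in a..t, c s * u s) :
    u b ≤ A * exp (∫ s in a..b, c s) := by
  set F : ℝ → ℝ := fun t => ∫ s in a..t, c s * u s
  set I : ℝ → ℝ := fun t => ∫ s in a..t, c s
  set G : ℝ → ℝ := fun t => (A + F t) * exp (-I t)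
  have hI_nonneg : ∀ t ∈ uIcc a b, 0 ≤ I t := fun t ht => by
    rw [uIcc_of_le hab] at ht
    exact integral_nonneg ht.1 fun x hx => hc_nonneg x ⟨hx.1, hx.2.trans ht.2⟩
  have hG_ac : AbsolutelyContinuousOnInterval G a b := by
    have hA : AbsolutelyContinuousOnInterval (fun _ => A) a b :=
      (LipschitzWith.const A).lipschitzOnWith.absolutelyContinuousOnInterval
    have hF := hcu.absolutelyContinuousOnInterval_intervalIntegral left_mem_uIcc
    have hI := hc.absolutelyContinuousOnInterval_intervalIntegral left_mem_uIcc
    exact (hA.fun_add hF).fun_mul <|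
      Real.lipschitzOnWith_exp_Iic_zero.comp_absolutelyContinuousOnInterval hI.neg
        fun t ht => neg_nonpos.2 (hI_nonneg t ht)
  have hG_deriv : ∀ᵐ x, x ∈ Ioc a b → deriv G x ≤ 0 := by
    filter_upwards [hcu.ae_hasDerivAt_integral, hc.ae_hasDerivAt_integral] with x hF hI hx
    have hx' : x ∈ uIcc a b := uIoc_subset_uIcc (by rwa [uIoc_of_le hab])
    have hG : HasDerivAt G (c x * (u x - (A + F x)) * exp (-I x)) x :=
      (((hF hx' a left_mem_uIcc).const_add A).mul (hI hx' a left_mem_uIcc).neg.exp).congr_deriv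
        (by simp only [Pi.neg_apply, F, I]; ring)
    rw [hG.deriv]
    have hx'' := Ioc_subset_Icc_self hx
    exact mul_nonpos_of_nonpos_of_nonneg
      (mul_nonpos_of_nonneg_of_nonpos (hc_nonneg x hx'') (sub_nonpos.2 (hu x hx'')))
      (exp_pos _).le
  have hG_le : G b ≤ A := by
    have hGa : G a = A := by simp [G, F, I]
    have hFTC := hG_ac.integral_deriv_eq_sub
    have : ∫ x in a..b, deriv G x ≤ 0 := by
      rw [integral_of_le hab]
      exact setIntegral_nonpos_ae measurableSet_Ioc hG_deriv
    linarith
  calc u b ≤ A + F b := hu b (right_mem_Icc.2 hab)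
    _ = G b * exp (I b) := by simp [G, mul_assoc, ← exp_add]
    _ ≤ A * exp (I b) := by gcongr

section calE

variable {E : ℝ → ℝ} {b c₀ : ℝ}

theorem sq_mul_le_calE (hE : Continuous E) {s t : ℝ} (hs : s ∈ Icc 0 t) :
    b ^ 2 * E s ≤ calE E b c₀ t :=
  (mul_le_mul_of_nonneg_left
    (le_csSup (isCompact_Icc.bddAbove_image hE.continuousOn) (mem_image_of_mem E hs))
    (sq_nonneg b)).trans (le_max_right _ _)

theorem calE_le (hb : 0 < b) {t R : ℝ} (ht : 0 ≤ t) (hc₀R : c₀ ≤ R)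
    (hER : ∀ s ∈ Icc 0 t, b ^ 2 * E s ≤ R) : calE E b c₀ t ≤ R := by
  refine max_le hc₀R ((le_div_iff₀' (by positivity)).1 ?_)
  refine csSup_le ((nonempty_Icc.2 ht).image E) ?_
  rintro _ ⟨s, hs, rfl⟩
  exact (le_div_iff₀' (by positivity)).2 (hER s hs)

theorem monotoneOn_calE (hE : Continuous E) : MonotoneOn (calE E b c₀) (Ici 0) :=
  fun _ hs _ _ hst => max_le_max le_rfl <| mul_le_mul_of_nonneg_left
    (csSup_le_csSup (isCompact_Icc.bddAbove_image hE.continuousOn)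
      ((nonempty_Icc.2 hs).image E) (image_mono (Icc_subset_Icc le_rfl hst)))
    (sq_nonneg b)

theorem intervalIntegrable_mul_calE (hE : Continuous E) {k : ℝ → ℝ} {t : ℝ} (ht : 0 ≤ t)
    (hk : IntervalIntegrable k volume 0 t) :
    IntervalIntegrable (fun s => k s * calE E b c₀ s) volume 0 t :=
  hk.mul_monotoneOn <| (monotoneOn_calE hE).mono fun s hs => by
    rw [uIcc_of_le ht] at hs; exact hs.1

theorem calE_le_calE_zero_add_integral {E' κ : ℝ → ℝ} (hb : 0 < b) (hc₀ : 0 ≤ c₀)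
    (hE : ∀ s, HasDerivAt E (E' s) s) {t : ℝ} (ht : 0 ≤ t)
    (hκ : IntervalIntegrable κ volume 0 t) (hκ_nonneg : ∀ s, 0 ≤ κ s)
    (hineq : ∀ s, 0 ≤ s → E' s ≤ κ s * calE E b c₀ s) :
    calE E b c₀ t ≤ calE E b c₀ 0 + ∫ s in 0..t, b ^ 2 * κ s * calE E b c₀ s := by
  have hEc : Continuous E := continuous_iff_continuousAt.2 fun s => (hE s).continuousAt
  have hnonneg : ∀ s, 0 ≤ b ^ 2 * κ s * calE E b c₀ s :=
    fun s => mul_nonneg (mul_nonneg (sq_nonneg b) (hκ_nonneg s)) (hc₀.trans (le_max_left _ _))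
  refine calE_le hb ht ((le_max_left _ _).trans
    (le_add_of_nonneg_right (integral_nonneg ht fun s _ => hnonneg s))) fun s hs => ?_
  have hFTC : E s - E 0 ≤ ∫ x in 0..s, κ x * calE E b c₀ x :=
    sub_le_integral_of_hasDeriv_right_of_le hs.1 hEc.continuousOn
      (fun x _ => (hE x).hasDerivWithinAt)
      ((intervalIntegrable_iff_integrableOn_Icc_of_le hs.1).1
        (intervalIntegrable_mul_calE hEc hs.1
          (hκ.mono_set (uIcc_subset_uIcc left_mem_uIcc (Icc_subset_uIcc hs)))))
      fun x hx => hineq x hx.1.le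
  calc b ^ 2 * E s = b ^ 2 * E 0 + b ^ 2 * (E s - E 0) := by ring
    _ ≤ calE E b c₀ 0 + ∫ x in 0..s, b ^ 2 * κ x * calE E b c₀ x := by
        simp_rw [mul_assoc, intervalIntegral.integral_const_mul]
        exact add_le_add (sq_mul_le_calE hEc ⟨le_rfl, le_rfl⟩)
          (mul_le_mul_of_nonneg_left hFTC (sq_nonneg b))
    _ ≤ calE E b c₀ 0 + ∫ x in 0..t, b ^ 2 * κ x * calE E b c₀ x := by
        gcongr
        exact integral_mono_interval le_rfl hs.1 hs.2 (ae_of_all _ hnonneg)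
          (intervalIntegrable_mul_calE hEc ht (hκ.const_mul _))

end calE

/-- the Gronwall step of Proposition 2.1. -/
theorem stmt2 (E k : ℝ → ℝ) (E' : ℝ → ℝ) (b c₀ : ℝ)
    (hb : 0 < b) (hc₀ : 0 ≤ c₀)
    (hE : ∀ t : ℝ, HasDerivAt E (E' t) t)
    (hk : ∀ a c : ℝ, IntervalIntegrable (fun s => |k s|) volume a c)
    (hineq : ∀ t : ℝ, 0 ≤ t → E' t ≤ 6 * |k t| * calE E b c₀ t) :
    ∀ t : ℝ, 0 ≤ t →
      calE E b c₀ t ≤ calE E b c₀ 0 * Real.exp (6 * b ^ 2 * ∫ s in (0:ℝ)..t, |k s|)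
      ∧ E t ≤ (1 / b ^ 2) * Real.exp (6 * b ^ 2 * ∫ s in (0:ℝ)..t, |k s|) * calE E b c₀ 0 := by
  intro t ht
  have hEc : Continuous E := continuous_iff_continuousAt.2 fun t => (hE t).continuousAt
  have hκ : IntervalIntegrable (fun s => 6 * |k s|) volume 0 t := (hk 0 t).const_mul 6
  have hintegral :
      ∫ s in (0:ℝ)..t, b ^ 2 * (6 * |k s|) = 6 * b ^ 2 * ∫ s in (0:ℝ)..t, |k s| := by
    simp only [intervalIntegral.integral_const_mul]; ring
  have hgronwall :
      calE E b c₀ t ≤ calE E b c₀ 0 * exp (6 * b ^ 2 * ∫ s in (0:ℝ)..t, |k s|) := by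
    rw [← hintegral]
    exact le_mul_exp_integral_of_le_add_integral ht (hκ.const_mul _)
      (intervalIntegrable_mul_calE hEc ht (hκ.const_mul _)) (fun s _ => by positivity)
      fun s hs => calE_le_calE_zero_add_integral hb hc₀ hE hs.1
        (hκ.mono_set (uIcc_subset_uIcc left_mem_uIcc (Icc_subset_uIcc hs)))
        (fun s => by positivity) hineq
  refine ⟨hgronwall, ?_⟩
  calc E t = 1 / b ^ 2 * (b ^ 2 * E t) := by field_simp
    _ ≤ 1 / b ^ 2 * (calE E b c₀ 0 * exp (6 * b ^ 2 * ∫ s in (0:ℝ)..t, |k s|)) :=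
        mul_le_mul_of_nonneg_left ((sq_mul_le_calE hEc ⟨ht, le_rfl⟩).trans hgronwall)
          (by positivity)
    _ = _ := by ring
end

section
/- Let u : [0,∞) → ℝ≥0 be continuous, τ̄ ≥ 0, M̃ ≥ 0, and φ : [0,∞) → ℝ≥0 locally integrable. Define ũ(t) := sup{u(s) : s ∈ [max(t−τ̄,0), t]}. If ũ(t) ≤ M̃ + ∫₀ᵗ φ(s)·ũ(s) ds for all t ≥ 0, then u(t) ≤ ũ(t) ≤ M̃·exp(∫₀ᵗ φ(s) ds) for all t ≥ 0. -/
open Real MeasureTheory intervalIntegral Set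

/-- The sliding-window running maximum `ũ(t) = sup{u(s) : s ∈ [max(t-τ̄,0), t]}`. -/
noncomputable def slidingMax (u : ℝ → ℝ) (τbar t : ℝ) : ℝ :=
  sSup (u '' Set.Icc (max (t - τbar) 0) t)

/-!
The running maximum `ũ` is continuous, being the supremum of the continuous `u` over a window
whose endpoints move continuously, so it suffices to prove Gronwall's inequality for a
continuous `g` and a merely integrable weight `φ ≥ 0`. For `K > M` the invariant
`∫ₐᵗ φ g + K ≤ K exp (∫ₐᵗ φ)` holds at `t = a` and is closed; it propagates to the right of any
point `x` where it holds, because near `x` the continuous `g` exceeds `g x ≤ M + ∫ₐˣ φ g` by at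
most `K - M`, and `1 + D ≤ exp D` absorbs the increment `D = ∫ₓʸ φ`. Letting `K → M` gives
`g ≤ M exp (∫ φ)`.
-/

open Filter Topology

theorem continuousOn_sSup_image_Icc {α γ : Type*} [ConditionallyCompleteLinearOrder α]
    [TopologicalSpace α] [OrderTopology α] [TopologicalSpace γ] {u : ℝ → α} {l r : γ → ℝ}
    {S : Set γ} (hu : Continuous u) (hl : Continuous l) (hr : Continuous r)
    (hlr : ∀ t ∈ S, l t ≤ r t) :
    ContinuousOn (fun t => sSup (u '' Icc (l t) (r t))) S := by
  refine (isCompact_Icc.continuous_sSup (K := Icc (0 : ℝ) 1)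
    (f := fun t θ => u (l t + θ * (r t - l t))) (by fun_prop)).continuousOn.congr fun t ht => ?_
  dsimp only
  rw [← segment_eq_Icc (hlr t ht), segment_eq_image', image_image]
  rfl

section Gronwall

variable {g φ : ℝ → ℝ} {a b M : ℝ}

theorem integral_mul_add_le_mul_exp_integral_propagate {x y K : ℝ} (hK : 0 ≤ K) (hxy : x ≤ y)
    (hφax : IntervalIntegrable φ volume a x) (hφxy : IntervalIntegrable φ volume x y)
    (hφgax : IntervalIntegrable (fun s => φ s * g s) volume a x)
    (hφgxy : IntervalIntegrable (fun s => φ s * g s) volume x y)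
    (hφ0 : ∀ z ∈ Icc x y, 0 ≤ φ z) (hgx : g x ≤ M + ∫ s in a..x, φ s * g s)
    (hgxy : ∀ z ∈ Icc x y, g z ≤ g x + (K - M))
    (hx : (∫ s in a..x, φ s * g s) + K ≤ K * exp (∫ s in a..x, φ s)) :
    (∫ s in a..y, φ s * g s) + K ≤ K * exp (∫ s in a..y, φ s) := by
  set A := ∫ s in a..x, φ s * g s
  set D := ∫ s in x..y, φ s
  have hD : 0 ≤ D := integral_nonneg hxy hφ0
  have hxy_int : (∫ s in x..y, φ s * g s) ≤ D * (g x + (K - M)) := by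
    rw [← intervalIntegral.integral_mul_const]
    exact integral_mono_on hxy hφgxy (hφxy.mul_const _)
      fun z hz => mul_le_mul_of_nonneg_left (hgxy z hz) (hφ0 z hz)
  calc (∫ s in a..y, φ s * g s) + K = A + (∫ s in x..y, φ s * g s) + K := by
        rw [integral_add_adjacent_intervals hφgax hφgxy]
    _ ≤ A + D * (A + K) + K := by
        have := mul_le_mul_of_nonneg_left (show g x + (K - M) ≤ A + K by linarith) hD
        linarith
    _ = (A + K) * (1 + D) := by ring
    _ ≤ K * exp (∫ s in a..x, φ s) * (1 + D) := by gcongr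
    _ ≤ K * exp (∫ s in a..x, φ s) * exp D := by gcongr; linarith [add_one_le_exp D]
    _ = K * exp (∫ s in a..y, φ s) := by
        rw [mul_assoc, ← exp_add, integral_add_adjacent_intervals hφax hφxy]

theorem integral_mul_add_le_mul_exp_integral {K : ℝ} (hM : 0 ≤ M) (hMK : M < K)
    (hg : ContinuousOn g (Icc a b)) (hφ : IntervalIntegrable φ volume a b)
    (hφ0 : ∀ t ∈ Icc a b, 0 ≤ φ t) (h : ∀ t ∈ Icc a b, g t ≤ M + ∫ s in a..t, φ s * g s) :
    Icc a b ⊆ {t | (∫ s in a..t, φ s * g s) + K ≤ K * exp (∫ s in a..t, φ s)} := by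
  obtain hab | hba := le_or_gt a b
  swap
  · simp [Icc_eq_empty_of_lt hba]
  have hφ' : ∀ c ∈ Icc a b, ∀ d ∈ Icc a b, IntervalIntegrable φ volume c d := fun c hc d hd =>
    hφ.mono_set ((uIcc_subset_Icc hc hd).trans Icc_subset_uIcc)
  have hφg : ∀ c ∈ Icc a b, ∀ d ∈ Icc a b, IntervalIntegrable (fun s => φ s * g s) volume c d :=
    fun c hc d hd => (hφ' c hc d hd).mul_continuousOn (hg.mono (uIcc_subset_Icc hc hd))
  have ha : a ∈ Icc a b := left_mem_Icc.2 hab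
  have hclosed : IsClosed ({t | (∫ s in a..t, φ s * g s) + K ≤ K * exp (∫ s in a..t, φ s)}
      ∩ Icc a b) := by
    rw [inter_comm]
    exact isClosed_Icc.isClosed_le
      (((continuousOn_primitive_interval' (hφg a ha b (right_mem_Icc.2 hab))
        left_mem_uIcc).mono Icc_subset_uIcc).add continuousOn_const)
      (continuousOn_const.mul (continuous_exp.comp_continuousOn
        ((continuousOn_primitive_interval' hφ left_mem_uIcc).mono Icc_subset_uIcc)))
  refine hclosed.Icc_subset_of_forall_mem_nhdsWithin (by simp) fun x ⟨hxs, hx⟩ => ?_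
  have hxI : x ∈ Icc a b := Ico_subset_Icc_self hx
  have hgx : ∀ᶠ z in 𝓝[≥] x, g z ≤ g x + (K - M) :=
    ((hg x hxI).mono_of_mem_nhdsWithin (Icc_mem_nhdsGE_of_mem hx)).eventually
      (eventually_le_nhds (lt_add_of_pos_right _ (sub_pos.2 hMK)))
  obtain ⟨c, hxc, hc⟩ := mem_nhdsGE_iff_exists_Ico_subset.1 hgx
  filter_upwards [Ioo_mem_nhdsGT (lt_min hxc hx.2)] with y hy
  have hyI : y ∈ Icc a b := ⟨hx.1.trans hy.1.le, hy.2.le.trans (min_le_right _ _)⟩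
  exact integral_mul_add_le_mul_exp_integral_propagate (hM.trans hMK.le) hy.1.le
    (hφ' a ha x hxI) (hφ' x hxI y hyI) (hφg a ha x hxI) (hφg x hxI y hyI)
    (fun z hz => hφ0 z ⟨hx.1.trans hz.1, hz.2.trans hyI.2⟩) (h x hxI)
    (fun z hz => hc ⟨hz.1, hz.2.trans_lt (hy.2.trans_le (min_le_left _ _))⟩) hxs

theorem le_mul_exp_integral_of_le_add_integral_s3 (hM : 0 ≤ M)
    (hg : ContinuousOn g (Icc a b)) (hφ : IntervalIntegrable φ volume a b)
    (hφ0 : ∀ t ∈ Icc a b, 0 ≤ φ t) (h : ∀ t ∈ Icc a b, g t ≤ M + ∫ s in a..t, φ s * g s) :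
    ∀ t ∈ Icc a b, g t ≤ M * exp (∫ s in a..t, φ s) := by
  intro t ht
  set E := exp (∫ s in a..t, φ s)
  have hlim : Tendsto (fun K => M + K * (E - 1)) (𝓝[>] M) (𝓝 (M + M * (E - 1))) :=
    ((continuous_const.add (continuous_id.mul continuous_const)).tendsto M).mono_left
      nhdsWithin_le_nhds
  calc g t ≤ M + M * (E - 1) := ge_of_tendsto hlim <| eventually_nhdsWithin_of_forall
        fun K hK => by
          have := integral_mul_add_le_mul_exp_integral hM hK hg hφ hφ0 h ht
          linarith [h t ht, this.out]
    _ = M * E := by ring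

end Gronwall

theorem stmt3_general (u φ : ℝ → ℝ) (τbar Mtilde : ℝ)
    (hu_cont : Continuous u)
    (hτ : 0 ≤ τbar) (hM : 0 ≤ Mtilde)
    (hφ_nonneg : ∀ t, 0 ≤ φ t)
    (hφ_int : ∀ a c : ℝ, IntervalIntegrable φ volume a c)
    (hineq : ∀ t : ℝ, 0 ≤ t →
      slidingMax u τbar t ≤ Mtilde + ∫ s in (0:ℝ)..t, φ s * slidingMax u τbar s) :
    ∀ t : ℝ, 0 ≤ t →
      u t ≤ slidingMax u τbar t
      ∧ slidingMax u τbar t ≤ Mtilde * Real.exp (∫ s in (0:ℝ)..t, φ s) := by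
  intro t ht
  have hwindow : ∀ s, 0 ≤ s → max (s - τbar) 0 ≤ s := fun s hs => max_le (by linarith) hs
  have hcont : ContinuousOn (slidingMax u τbar) (Icc 0 t) :=
    continuousOn_sSup_image_Icc hu_cont (by fun_prop) continuous_id fun s hs => hwindow s hs.1
  exact ⟨le_csSup (isCompact_Icc.image hu_cont).bddAbove
      (mem_image_of_mem u ⟨hwindow t ht, le_rfl⟩),
    le_mul_exp_integral_of_le_add_integral_s3 hM hcont (hφ_int 0 t) (fun s _ => hφ_nonneg s)
      (fun s hs => hineq s hs.1) t ⟨ht, le_rfl⟩⟩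

/-- delayed Gronwall argument from the proof of Theorem 3.1. -/
theorem stmt3 (u φ : ℝ → ℝ) (τbar Mtilde : ℝ)
    (hu_cont : Continuous u) (hu_nonneg : ∀ t, 0 ≤ u t)
    (hτ : 0 ≤ τbar) (hM : 0 ≤ Mtilde)
    (hφ_nonneg : ∀ t, 0 ≤ φ t)
    (hφ_int : ∀ a c : ℝ, IntervalIntegrable φ volume a c)
    (hineq : ∀ t : ℝ, 0 ≤ t →
      slidingMax u τbar t ≤ Mtilde + ∫ s in (0:ℝ)..t, φ s * slidingMax u τbar s) :
    ∀ t : ℝ, 0 ≤ t →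
      u t ≤ slidingMax u τbar t
      ∧ slidingMax u τbar t ≤ Mtilde * Real.exp (∫ s in (0:ℝ)..t, φ s) :=
  stmt3_general u φ τbar Mtilde hu_cont hτ hM hφ_nonneg hφ_int hineq
end
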